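/- Let m ∈ {0,1}, r ≥ 0, and let (h_n) satisfy |h_0|,|h_1| ≤ M, |h_n| ≤ M (log n)^r / n^{(m+3)/2} for n ≥ 2, and ∑_{n≥0} h_n = 0. Then the convolution with a_k^{(1)} = (-1)^k C(-1/2,k) satisfies |∑_{k=0}^n h_k a_{n-k}^{(1)}| ≤ C · M · (log n)^{r + δ_m} / n^{(m+2)/2} for n ≥ 2, where δ_m = 1 if m is odd and 0 otherwise, and C depends only on m and r. -/

import Mathlib

open Finset Real

/-- `a n^{(1)} = (-1)^n * C(-1/2, n)`, the coefficients of `(1-s)^{-1/2}`. -/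
noncomputable def aOne (n : ℕ) : ℝ :=
  (-1 : ℝ) ^ n * (∏ i ∈ Finset.range n, ((-1 : ℝ) / 2 - i)) / (Nat.factorial n)




lemma aOne_zero : aOne 0 = 1 := by simp [aOne]

lemma aOne_succ (n : ℕ) : aOne (n + 1) = aOne n * ((2 * n + 1) / (2 * n + 2)) := by
  unfold aOne
  rw [Finset.prod_range_succ, Nat.factorial_succ]
  push_cast
  field_simp
  ring

lemma aOne_pos (n : ℕ) : 0 < aOne n := by
  induction n with
  | zero => rw [aOne_zero]; norm_num
  | succ n ih =>
    rw [aOne_succ]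
    apply mul_pos ih
    positivity

lemma aOne_le_one (n : ℕ) : aOne n ≤ 1 := by
  induction n with
  | zero => rw [aOne_zero]
  | succ n ih =>
    rw [aOne_succ]
    have h1 : (2 * (n:ℝ) + 1) / (2 * n + 2) ≤ 1 := by
      rw [div_le_one (by positivity)]; linarith
    nlinarith [aOne_pos n]

lemma aOne_sub_succ (n : ℕ) : aOne n - aOne (n + 1) = aOne n / (2 * n + 2) := by
  rw [aOne_succ]
  field_simp
  ring

lemma aOne_anti (n : ℕ) : aOne (n + 1) ≤ aOne n := by
  have := aOne_sub_succ n
  have h2 : 0 ≤ aOne n / (2 * (n:ℝ) + 2) := by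
    have := aOne_pos n; positivity
  linarith

lemma aOne_sqrt_le (n : ℕ) : aOne n * Real.sqrt (n + 1) ≤ 1 := by
  induction n with
  | zero => simp [aOne_zero]
  | succ n ih =>
    rw [aOne_succ]
    have hs1 : Real.sqrt ((n:ℝ) + 1) > 0 := Real.sqrt_pos.2 (by positivity)
    have hs2 : Real.sqrt ((n:ℝ) + 1 + 1) > 0 := Real.sqrt_pos.2 (by positivity)
    have key : (2 * (n:ℝ) + 1) * Real.sqrt ((n:ℝ) + 1 + 1) ≤ (2 * n + 2) * Real.sqrt ((n:ℝ) + 1) := by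
      have h1 : ((2 * (n:ℝ) + 1) * Real.sqrt ((n:ℝ) + 1 + 1)) ^ 2 ≤ ((2 * (n:ℝ) + 2) * Real.sqrt ((n:ℝ) + 1)) ^ 2 := by
        have e1 : Real.sqrt ((n:ℝ) + 1 + 1) ^ 2 = (n:ℝ) + 2 := by
          rw [Real.sq_sqrt (by positivity)]; ring
        have e2 : Real.sqrt ((n:ℝ) + 1) ^ 2 = (n:ℝ) + 1 := Real.sq_sqrt (by positivity)
        rw [mul_pow, mul_pow, e1, e2]
        nlinarith [Nat.cast_nonneg (α := ℝ) n]
      have h2 : 0 ≤ (2 * (n:ℝ) + 2) * Real.sqrt ((n:ℝ) + 1) := by positivity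
      nlinarith [mul_pos (by positivity : (0:ℝ) < 2 * (n:ℝ) + 1) hs2]
    push_cast
    calc aOne n * ((2 * (n:ℝ) + 1) / (2 * n + 2)) * Real.sqrt ((n:ℝ) + 1 + 1)
        = aOne n * ((2 * (n:ℝ) + 1) * Real.sqrt ((n:ℝ) + 1 + 1)) / (2 * n + 2) := by ring
      _ ≤ aOne n * ((2 * (n:ℝ) + 2) * Real.sqrt ((n:ℝ) + 1)) / (2 * n + 2) := by
          apply div_le_div_of_nonneg_right ?_ (by positivity)
          exact mul_le_mul_of_nonneg_left key (aOne_pos n).le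
      _ = aOne n * Real.sqrt ((n:ℝ) + 1) := by field_simp
      _ ≤ 1 := ih

lemma aOne_le (n : ℕ) : aOne n ≤ 1 / Real.sqrt (n + 1) := by
  have hs : Real.sqrt ((n:ℝ) + 1) > 0 := Real.sqrt_pos.2 (by positivity)
  rw [le_div_iff₀ hs]
  exact aOne_sqrt_le n


lemma sum_one_div_sqrt (N : ℕ) : ∑ j ∈ Finset.range N, 1 / Real.sqrt (j + 1) ≤ 2 * Real.sqrt N := by
  have key : ∀ j : ℕ, 1 / Real.sqrt (j + 1) ≤ 2 * (Real.sqrt (j + 1) - Real.sqrt j) := by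
    intro j
    have h1 : Real.sqrt (j+1) > 0 := Real.sqrt_pos.2 (by positivity)
    have hmul : (Real.sqrt ((j:ℝ)+1) - Real.sqrt j) * (Real.sqrt ((j:ℝ)+1) + Real.sqrt j) = 1 := by
      have e1 : Real.sqrt ((j:ℝ)+1) ^ 2 = (j:ℝ) + 1 := Real.sq_sqrt (by positivity)
      have e2 : Real.sqrt ((j:ℝ)) ^ 2 = (j:ℝ) := Real.sq_sqrt (by positivity)
      nlinarith
    have hss : Real.sqrt (j:ℝ) ≤ Real.sqrt ((j:ℝ)+1) := Real.sqrt_le_sqrt (by norm_num)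
    rw [div_le_iff₀ h1]
    nlinarith [hmul, hss, Real.sqrt_nonneg (j:ℝ)]
  calc ∑ j ∈ Finset.range N, 1 / Real.sqrt (j + 1)
      ≤ ∑ j ∈ Finset.range N, 2 * (Real.sqrt (j+1) - Real.sqrt j) :=
        Finset.sum_le_sum fun j _ => key j
    _ = 2 * Real.sqrt N := by
        have tel := Finset.sum_range_sub (fun j : ℕ => Real.sqrt j) N
        push_cast at tel
        rw [← Finset.mul_sum, tel]
        simp

lemma sum_inv_le_log (N : ℕ) (hN : 1 ≤ N) :
    ∑ k ∈ Finset.Ico 2 (N + 1), (1:ℝ) / k ≤ Real.log N := by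
  induction N with
  | zero => omega
  | succ N ih =>
    rcases Nat.eq_or_lt_of_le hN with h1 | h2
    · simp [← h1]
    · have hN1 : 1 ≤ N := by omega
      have step : (1:ℝ) / (N + 1) ≤ Real.log (N + 1) - Real.log N := by
        have h := Real.log_le_sub_one_of_pos (x := (N:ℝ) / (N + 1)) (by positivity)
        rw [Real.log_div (by positivity) (by positivity)] at h
        have e : (N:ℝ) / (N + 1) - 1 = -(1 / (N + 1)) := by field_simp; ring
        rw [e] at h
        linarith
      rw [Finset.sum_Ico_succ_top (by omega)]
      push_cast
      push_cast at ih step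
      linarith [ih hN1]

lemma tail_step (q : ℝ) (hq : 1 < q) (j : ℕ) (hj : 1 ≤ j) :
    (q - 1) * ((j:ℝ) + 1) ^ (-q) ≤ (j:ℝ) ^ (1 - q) - ((j:ℝ) + 1) ^ (1 - q) := by
  have hx : (0:ℝ) < j := by exact_mod_cast hj
  have hx1 : (0:ℝ) < (j:ℝ) + 1 := by linarith
  have hjq : (0:ℝ) < (j:ℝ) ^ q := Real.rpow_pos_of_pos hx q
  have hj1q : (0:ℝ) < ((j:ℝ)+1) ^ q := Real.rpow_pos_of_pos hx1 q
  have hs : (-1:ℝ) ≤ 1/(j:ℝ) := by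
    have : (0:ℝ) ≤ 1/(j:ℝ) := by positivity
    linarith
  have hber : 1 + q * (1/j) ≤ (1 + 1/j) ^ q := one_add_mul_self_le_rpow_one_add hs hq.le
  have he : ((1:ℝ) + 1/j) ^ q = ((j:ℝ)+1) ^ q / (j:ℝ) ^ q := by
    rw [← Real.div_rpow (by positivity) hx.le]
    congr 1
    field_simp
  rw [he] at hber
  have key : ((j:ℝ) + q) / ((j:ℝ)+1)^q ≤ (j:ℝ) / (j:ℝ)^q := by
    rw [div_le_div_iff₀ hj1q hjq]
    have h2 : (1 + q * (1/(j:ℝ))) * ((j:ℝ) * (j:ℝ)^q) ≤ (((j:ℝ)+1)^q / (j:ℝ)^q) * ((j:ℝ) * (j:ℝ)^q) :=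
      mul_le_mul_of_nonneg_right hber (by positivity)
    have e3 : (1 + q * (1/(j:ℝ))) * ((j:ℝ) * (j:ℝ)^q) = ((j:ℝ) + q) * (j:ℝ)^q := by
      field_simp
    have e4 : (((j:ℝ)+1)^q / (j:ℝ)^q) * ((j:ℝ) * (j:ℝ)^q) = (j:ℝ) * ((j:ℝ)+1)^q := by
      field_simp
    rw [e3, e4] at h2
    linarith
  have e1 : (j:ℝ) ^ (1 - q) = (j:ℝ) / (j:ℝ)^q := by
    rw [Real.rpow_sub hx, Real.rpow_one]
  have e2 : ((j:ℝ)+1) ^ (1 - q) = ((j:ℝ)+1) / ((j:ℝ)+1)^q := by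
    rw [Real.rpow_sub hx1, Real.rpow_one]
  have e5 : ((j:ℝ)+1) ^ (-q) = 1 / ((j:ℝ)+1)^q := by
    rw [Real.rpow_neg hx1.le]; field_simp
  rw [e1, e2, e5]
  have expand : (j:ℝ) / (j:ℝ)^q - ((j:ℝ)+1) / ((j:ℝ)+1)^q ≥ ((j:ℝ)+q) / ((j:ℝ)+1)^q - ((j:ℝ)+1) / ((j:ℝ)+1)^q := by linarith
  have : ((j:ℝ)+q) / ((j:ℝ)+1)^q - ((j:ℝ)+1) / ((j:ℝ)+1)^q = (q - 1) * (1 / ((j:ℝ)+1)^q) := by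
    field_simp
    ring
  linarith


lemma tail_partial (q : ℝ) (hq : 1 < q) (n : ℕ) (hn : 1 ≤ n) (N : ℕ) :
    ∑ k ∈ Finset.range N, ((k:ℝ) + n + 1) ^ (-q)
      ≤ ((n:ℝ) ^ (1 - q) - ((N:ℝ) + n) ^ (1 - q)) / (q - 1) := by
  induction N with
  | zero => simp
  | succ N ih =>
    rw [Finset.sum_range_succ]
    have hstep := tail_step q hq (N + n) (by omega)
    push_cast at hstep
    have hq1 : (0:ℝ) < q - 1 := by linarith
    have e : ((N:ℝ) + n + 1) ^ (-q) ≤ (((N:ℝ) + n) ^ (1 - q) - ((N:ℝ) + 1 + n) ^ (1 - q)) / (q - 1) := by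
      rw [le_div_iff₀ hq1]
      calc ((N:ℝ) + n + 1) ^ (-q) * (q - 1) = (q - 1) * (((N:ℝ) + n) + 1) ^ (-q) := by ring_nf
        _ ≤ ((N:ℝ) + n) ^ (1 - q) - (((N:ℝ) + n) + 1) ^ (1 - q) := hstep
        _ = ((N:ℝ) + n) ^ (1 - q) - ((N:ℝ) + 1 + n) ^ (1 - q) := by ring_nf
    calc ∑ k ∈ Finset.range N, ((k:ℝ) + n + 1) ^ (-q) + ((N:ℝ) + n + 1) ^ (-q)
        ≤ ((n:ℝ) ^ (1 - q) - ((N:ℝ) + n) ^ (1 - q)) / (q - 1)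
          + (((N:ℝ) + n) ^ (1 - q) - ((N:ℝ) + 1 + n) ^ (1 - q)) / (q - 1) := add_le_add ih e
      _ = ((n:ℝ) ^ (1 - q) - ((N:ℝ) + 1 + n) ^ (1 - q)) / (q - 1) := by ring
      _ = ((n:ℝ) ^ (1 - q) - (((N + 1 : ℕ) : ℝ) + n) ^ (1 - q)) / (q - 1) := by push_cast; ring_nf

lemma summable_shift_rpow (q : ℝ) (hq : 1 < q) (n : ℕ) :
    Summable (fun k : ℕ => ((k:ℝ) + n + 1) ^ (-q)) := by
  have h1 : Summable (fun j : ℕ => (j:ℝ) ^ (-q)) :=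
    Real.summable_nat_rpow.2 (by linarith)
  have h2 := h1.comp_injective (i := fun k : ℕ => k + (n + 1)) (fun a b hab => by simpa using hab)
  refine h2.congr fun k => ?_
  simp only [Function.comp]
  push_cast
  ring_nf

lemma tail_tsum (q : ℝ) (hq : 1 < q) (n : ℕ) (hn : 1 ≤ n) :
    ∑' k : ℕ, ((k:ℝ) + n + 1) ^ (-q) ≤ (n:ℝ) ^ (1 - q) / (q - 1) := by
  apply Summable.tsum_le_of_sum_le (summable_shift_rpow q hq n)
  intro s
  obtain ⟨N, hN⟩ := s.exists_nat_subset_range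
  calc ∑ i ∈ s, ((i:ℝ) + n + 1) ^ (-q)
      ≤ ∑ k ∈ Finset.range N, ((k:ℝ) + n + 1) ^ (-q) :=
        Finset.sum_le_sum_of_subset_of_nonneg hN fun k _ _ => by positivity
    _ ≤ ((n:ℝ) ^ (1 - q) - ((N:ℝ) + n) ^ (1 - q)) / (q - 1) := tail_partial q hq n hn N
    _ ≤ (n:ℝ) ^ (1 - q) / (q - 1) := by
        apply div_le_div_of_nonneg_right ?_ (by linarith)
        have : (0:ℝ) ≤ ((N:ℝ) + n) ^ (1 - q) := Real.rpow_nonneg (by positivity) _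
        linarith

lemma pow_add_le (r : ℕ) (a b : ℝ) (ha : 0 ≤ a) (hb : 0 ≤ b) :
    (a + b) ^ r ≤ 2 ^ r * (a ^ r + b ^ r) := by
  rcases le_total a b with hab | hab
  · calc (a + b) ^ r ≤ (2 * b) ^ r := pow_le_pow_left₀ (by linarith) (by linarith) r
      _ = 2 ^ r * b ^ r := by rw [mul_pow]
      _ ≤ 2 ^ r * (a ^ r + b ^ r) := by
          have : (0:ℝ) ≤ a ^ r := by positivity
          nlinarith [pow_nonneg hb r, pow_pos (by norm_num : (0:ℝ) < 2) r]
  · calc (a + b) ^ r ≤ (2 * a) ^ r := pow_le_pow_left₀ (by linarith) (by linarith) r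
      _ = 2 ^ r * a ^ r := by rw [mul_pow]
      _ ≤ 2 ^ r * (a ^ r + b ^ r) := by
          have : (0:ℝ) ≤ b ^ r := by positivity
          nlinarith [pow_nonneg ha r, pow_pos (by norm_num : (0:ℝ) < 2) r]

lemma log_le_rpow (x ε : ℝ) (hx : 1 ≤ x) (hε : 0 < ε) : Real.log x ≤ x ^ ε / ε := by
  have hx0 : (0:ℝ) < x := by linarith
  have h1 : Real.log (x ^ ε) = ε * Real.log x := Real.log_rpow hx0 ε
  have h2 : Real.log (x ^ ε) ≤ x ^ ε - 1 := Real.log_le_sub_one_of_pos (Real.rpow_pos_of_pos hx0 ε)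
  have h3 : ε * Real.log x ≤ x ^ ε := by rw [← h1]; linarith
  rw [le_div_iff₀ hε]
  linarith [h3]


noncomputable def Ctail (r : ℕ) (p : ℝ) : ℝ :=
  2 ^ r / (p - 1) +
    2 ^ r * (4 * ((r:ℝ) + 1)) ^ r / ((p - (r:ℝ) * (4 * ((r:ℝ) + 1))⁻¹ - 1) * (Real.log 2) ^ r)

lemma tail_bound (r : ℕ) (p : ℝ) (hp : 3/2 ≤ p) (M : ℝ) (hM : 0 ≤ M) (h : ℕ → ℝ)
    (hh : ∀ j : ℕ, 2 ≤ j → |h j| ≤ M * (Real.log j) ^ r / (j:ℝ) ^ p)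
    (hsum : Summable h) (n : ℕ) (hn : 2 ≤ n) :
    |∑' k : ℕ, h (k + (n + 1))| ≤ Ctail r p * M * (Real.log n) ^ r * (n:ℝ) ^ (1 - p) := by
  set ε : ℝ := (4 * ((r:ℝ) + 1))⁻¹ with hεdef
  have hε : 0 < ε := by positivity
  have her : (r:ℝ) * ε ≤ 1/4 := by
    rw [hεdef, mul_inv_le_iff₀ (by positivity)]
    push_cast
    nlinarith [Nat.cast_nonneg (α := ℝ) r]
  have hernn : 0 ≤ (r:ℝ) * ε := by positivity
  set q2 : ℝ := p - (r:ℝ) * ε with hq2def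
  have hq2 : 1 < q2 := by rw [hq2def]; linarith
  have hp1 : 1 < p := by linarith
  have hnR : (0:ℝ) < n := by positivity
  have hn1R : (1:ℝ) ≤ n := by exact_mod_cast (by omega : 1 ≤ n)
  have hL : 0 ≤ Real.log n := Real.log_nonneg hn1R
  have hL2 : Real.log 2 ≤ Real.log n := Real.log_le_log (by norm_num) (by exact_mod_cast hn)
  have hlog2 : 0 < Real.log 2 := Real.log_pos (by norm_num)
  -- the dominating function
  set g : ℕ → ℝ := fun k =>
    M * 2 ^ r * ((Real.log n) ^ r * ((k:ℝ) + n + 1) ^ (-p)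
      + (ε⁻¹) ^ r * (n:ℝ) ^ (-((r:ℝ) * ε)) * ((k:ℝ) + n + 1) ^ (-q2)) with hgdef
  -- pointwise bound
  have hpt : ∀ k : ℕ, |h (k + (n + 1))| ≤ g k := by
    intro k
    have hj2 : 2 ≤ k + (n + 1) := by omega
    have hjR : ((k + (n + 1) : ℕ) : ℝ) = (k:ℝ) + n + 1 := by push_cast; ring
    have hjpos : (0:ℝ) < (k:ℝ) + n + 1 := by positivity
    have hjge : (n:ℝ) ≤ (k:ℝ) + n + 1 := by linarith [Nat.cast_nonneg (α := ℝ) k]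
    have hu1 : (1:ℝ) ≤ ((k:ℝ) + n + 1) / n := (le_div_iff₀ hnR).2 (by linarith)
    have hbound := hh (k + (n + 1)) hj2
    rw [hjR] at hbound
    -- log split
    have hlogsplit : Real.log ((k:ℝ) + n + 1)
        = Real.log n + Real.log (((k:ℝ) + n + 1) / n) := by
      rw [Real.log_div hjpos.ne' hnR.ne']
      ring
    have hBnn : 0 ≤ Real.log (((k:ℝ) + n + 1) / n) := Real.log_nonneg hu1
    have hsplit : (Real.log ((k:ℝ) + n + 1)) ^ r
        ≤ 2 ^ r * ((Real.log n) ^ r + (Real.log (((k:ℝ) + n + 1) / n)) ^ r) := by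
      rw [hlogsplit]; exact pow_add_le r _ _ hL hBnn
    have hBr : (Real.log (((k:ℝ) + n + 1) / n)) ^ r
        ≤ (ε⁻¹) ^ r * (((k:ℝ) + n + 1) / n) ^ ((r:ℝ) * ε) := by
      have h1 : Real.log (((k:ℝ) + n + 1) / n) ≤ (((k:ℝ) + n + 1) / n) ^ ε / ε :=
        log_le_rpow _ _ hu1 hε
      have h2 : (Real.log (((k:ℝ) + n + 1) / n)) ^ r ≤ ((((k:ℝ) + n + 1) / n) ^ ε / ε) ^ r :=
        pow_le_pow_left₀ hBnn h1 r
      have h3 : ((((k:ℝ) + n + 1) / n) ^ ε / ε) ^ r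
          = (ε⁻¹) ^ r * ((((k:ℝ) + n + 1) / n) ^ ε) ^ r := by
        rw [div_pow]; field_simp
        rw [one_div, ← mul_pow, mul_inv_cancel₀ hε.ne', one_pow]
      have h4 : ((((k:ℝ) + n + 1) / n) ^ ε) ^ r = (((k:ℝ) + n + 1) / n) ^ ((r:ℝ) * ε) := by
        rw [← Real.rpow_natCast ((((k:ℝ) + n + 1) / n) ^ ε) r, ← Real.rpow_mul (by positivity)]
        ring_nf
      rw [h3, h4] at h2
      exact h2
    have hdivpow : (((k:ℝ) + n + 1) / n) ^ ((r:ℝ) * ε)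
        = ((k:ℝ) + n + 1) ^ ((r:ℝ) * ε) * (n:ℝ) ^ (-((r:ℝ) * ε)) := by
      rw [Real.div_rpow hjpos.le hnR.le, Real.rpow_neg hnR.le]
      ring
    have hcombine : ((k:ℝ) + n + 1) ^ ((r:ℝ) * ε) * ((k:ℝ) + n + 1) ^ (-p)
        = ((k:ℝ) + n + 1) ^ (-q2) := by
      rw [← Real.rpow_add hjpos]
      congr 1
      rw [hq2def]
      ring
    have hjp : (0:ℝ) < ((k:ℝ) + n + 1) ^ p := Real.rpow_pos_of_pos hjpos p
    have hdivneg : M * (Real.log ((k:ℝ) + n + 1)) ^ r / ((k:ℝ) + n + 1) ^ p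
        = M * (Real.log ((k:ℝ) + n + 1)) ^ r * ((k:ℝ) + n + 1) ^ (-p) := by
      rw [Real.rpow_neg hjpos.le]
      ring
    have hjnp : (0:ℝ) ≤ ((k:ℝ) + n + 1) ^ (-p) := (Real.rpow_pos_of_pos hjpos _).le
    calc |h (k + (n + 1))| ≤ M * (Real.log ((k:ℝ) + n + 1)) ^ r / ((k:ℝ) + n + 1) ^ p := hbound
      _ = M * ((Real.log ((k:ℝ) + n + 1)) ^ r * ((k:ℝ) + n + 1) ^ (-p)) := by
          rw [hdivneg]; ring
      _ ≤ M * ((2 ^ r * ((Real.log n) ^ r + (Real.log (((k:ℝ) + n + 1) / n)) ^ r)) * ((k:ℝ) + n + 1) ^ (-p)) := by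
          apply mul_le_mul_of_nonneg_left _ hM
          exact mul_le_mul_of_nonneg_right hsplit hjnp
      _ ≤ M * ((2 ^ r * ((Real.log n) ^ r + (ε⁻¹) ^ r * (((k:ℝ) + n + 1) / n) ^ ((r:ℝ) * ε))) * ((k:ℝ) + n + 1) ^ (-p)) := by
          apply mul_le_mul_of_nonneg_left _ hM
          apply mul_le_mul_of_nonneg_right _ hjnp
          apply mul_le_mul_of_nonneg_left _ (by positivity)
          linarith [hBr]
      _ = g k := by
          rw [hgdef]
          simp only []
          rw [hdivpow, ← hcombine]
          ring
  -- summability facts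
  have hsum1 : Summable (fun k : ℕ => ((k:ℝ) + n + 1) ^ (-p)) := summable_shift_rpow p hp1 n
  have hsum2 : Summable (fun k : ℕ => ((k:ℝ) + n + 1) ^ (-q2)) := summable_shift_rpow q2 hq2 n
  have hsumg : Summable g := by
    apply Summable.mul_left
    exact ((hsum1.mul_left _).add ((hsum2.mul_left _)))
  have hsumh : Summable (fun k : ℕ => h (k + (n + 1))) :=
    hsum.comp_injective (fun a b hab => by simpa using hab)
  have hsumabs : Summable (fun k : ℕ => |h (k + (n + 1))|) := by
    apply Summable.of_nonneg_of_le (fun k => abs_nonneg _) hpt hsumg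
  -- main estimate
  have hT1 := tail_tsum p hp1 n (by omega)
  have hT2 := tail_tsum q2 hq2 n (by omega)
  have step1 : |∑' k : ℕ, h (k + (n + 1))| ≤ ∑' k : ℕ, |h (k + (n + 1))| := by
    have := norm_tsum_le_tsum_norm (f := fun k : ℕ => h (k + (n + 1)))
      (by simpa [Real.norm_eq_abs] using hsumabs)
    simpa [Real.norm_eq_abs] using this
  have step2 : ∑' k : ℕ, |h (k + (n + 1))| ≤ ∑' k, g k := Summable.tsum_le_tsum hpt hsumabs hsumg
  have hgsum : ∑' k, g k = M * 2 ^ r * ((Real.log n) ^ r * ∑' k : ℕ, ((k:ℝ) + n + 1) ^ (-p)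
      + (ε⁻¹) ^ r * (n:ℝ) ^ (-((r:ℝ) * ε)) * ∑' k : ℕ, ((k:ℝ) + n + 1) ^ (-q2)) := by
    rw [hgdef, tsum_mul_left]
    congr 1
    rw [Summable.tsum_add (hsum1.mul_left _) (hsum2.mul_left _), tsum_mul_left, tsum_mul_left]
  -- final algebra
  have hnre : (n:ℝ) ^ (-((r:ℝ) * ε)) * (n:ℝ) ^ (1 - q2) = (n:ℝ) ^ (1 - p) := by
    rw [← Real.rpow_add hnR]
    congr 1
    rw [hq2def]; ring
  have hfin : ∑' k, g k ≤ Ctail r p * M * (Real.log n) ^ r * (n:ℝ) ^ (1 - p) := by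
    rw [hgsum]
    have b1 : (Real.log n) ^ r * ∑' k : ℕ, ((k:ℝ) + n + 1) ^ (-p)
        ≤ (Real.log n) ^ r * ((n:ℝ) ^ (1 - p) / (p - 1)) :=
      mul_le_mul_of_nonneg_left hT1 (by positivity)
    have b2 : (ε⁻¹) ^ r * (n:ℝ) ^ (-((r:ℝ) * ε)) * ∑' k : ℕ, ((k:ℝ) + n + 1) ^ (-q2)
        ≤ (ε⁻¹) ^ r * (n:ℝ) ^ (-((r:ℝ) * ε)) * ((n:ℝ) ^ (1 - q2) / (q2 - 1)) := by
      apply mul_le_mul_of_nonneg_left hT2 (by positivity)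
    have b2' : (ε⁻¹) ^ r * (n:ℝ) ^ (-((r:ℝ) * ε)) * ((n:ℝ) ^ (1 - q2) / (q2 - 1))
        = (ε⁻¹) ^ r / (q2 - 1) * (n:ℝ) ^ (1 - p) := by
      rw [show (ε⁻¹) ^ r * (n:ℝ) ^ (-((r:ℝ) * ε)) * ((n:ℝ) ^ (1 - q2) / (q2 - 1))
          = (ε⁻¹) ^ r / (q2 - 1) * ((n:ℝ) ^ (-((r:ℝ) * ε)) * (n:ℝ) ^ (1 - q2)) from by ring, hnre]
    have hone : (1:ℝ) ≤ (Real.log n) ^ r / (Real.log 2) ^ r := by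
      rw [le_div_iff₀ (by positivity)]
      calc (1:ℝ) * Real.log 2 ^ r = Real.log 2 ^ r := by ring
        _ ≤ (Real.log n) ^ r := pow_le_pow_left₀ hlog2.le hL2 r
    have hnp : (0:ℝ) ≤ (n:ℝ) ^ (1 - p) := (Real.rpow_pos_of_pos hnR _).le
    have hcnn : 0 ≤ (ε⁻¹) ^ r / (q2 - 1) * (n:ℝ) ^ (1 - p) := by
      apply mul_nonneg (div_nonneg (pow_nonneg (inv_pos.2 hε).le r) (by linarith)) hnp
    have b3 : (ε⁻¹) ^ r / (q2 - 1) * (n:ℝ) ^ (1 - p)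
        ≤ (ε⁻¹) ^ r / (q2 - 1) * (n:ℝ) ^ (1 - p) * ((Real.log n) ^ r / (Real.log 2) ^ r) :=
      le_mul_of_one_le_right hcnn hone
    have hC : Ctail r p = 2 ^ r / (p - 1) + 2 ^ r * (ε⁻¹) ^ r / ((q2 - 1) * (Real.log 2) ^ r) := by
      rw [Ctail, hεdef, inv_inv, hq2def]
    have hfinal : M * 2 ^ r * ((Real.log n) ^ r * ((n:ℝ) ^ (1 - p) / (p - 1))
        + (ε⁻¹) ^ r / (q2 - 1) * (n:ℝ) ^ (1 - p) * ((Real.log n) ^ r / (Real.log 2) ^ r))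
        = Ctail r p * M * (Real.log n) ^ r * (n:ℝ) ^ (1 - p) := by
      rw [hC]
      have h1 : p - 1 ≠ 0 := by linarith
      have h2 : q2 - 1 ≠ 0 := by linarith
      have h3 : (Real.log 2) ^ r ≠ 0 := by positivity
      field_simp
    have hM2 : 0 ≤ M * 2 ^ r := by positivity
    calc M * 2 ^ r * ((Real.log n) ^ r * ∑' k : ℕ, ((k:ℝ) + n + 1) ^ (-p)
        + (ε⁻¹) ^ r * (n:ℝ) ^ (-((r:ℝ) * ε)) * ∑' k : ℕ, ((k:ℝ) + n + 1) ^ (-q2))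
        ≤ M * 2 ^ r * ((Real.log n) ^ r * ((n:ℝ) ^ (1 - p) / (p - 1))
          + (ε⁻¹) ^ r / (q2 - 1) * (n:ℝ) ^ (1 - p) * ((Real.log n) ^ r / (Real.log 2) ^ r)) := by
          apply mul_le_mul_of_nonneg_left _ hM2
          apply add_le_add b1
          calc (ε⁻¹) ^ r * (n:ℝ) ^ (-((r:ℝ) * ε)) * ∑' k : ℕ, ((k:ℝ) + n + 1) ^ (-q2)
              ≤ (ε⁻¹) ^ r * (n:ℝ) ^ (-((r:ℝ) * ε)) * ((n:ℝ) ^ (1 - q2) / (q2 - 1)) := b2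
            _ = (ε⁻¹) ^ r / (q2 - 1) * (n:ℝ) ^ (1 - p) := b2'
            _ ≤ _ := b3
      _ = Ctail r p * M * (Real.log n) ^ r * (n:ℝ) ^ (1 - p) := hfinal
  calc |∑' k : ℕ, h (k + (n + 1))| ≤ ∑' k : ℕ, |h (k + (n + 1))| := step1
    _ ≤ ∑' k, g k := step2
    _ ≤ _ := hfin




lemma aOne_mono {i j : ℕ} (hij : i ≤ j) : aOne j ≤ aOne i := by
  induction j, hij using Nat.le_induction with
  | base => exact le_refl _
  | succ j hij ih => exact le_trans (aOne_anti j) ih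

lemma aOne_step_le (j : ℕ) : aOne j - aOne (j + 1) ≤ 1 / (2 * ((j:ℝ) + 1) * Real.sqrt (j + 1)) := by
  rw [aOne_sub_succ]
  have hs : 0 < Real.sqrt ((j:ℝ) + 1) := Real.sqrt_pos.2 (by positivity)
  have h1 : aOne j ≤ 1 / Real.sqrt ((j:ℝ) + 1) := aOne_le j
  rw [div_le_div_iff₀ (by positivity) (by positivity)]
  calc aOne j * (2 * ((j:ℝ) + 1) * Real.sqrt ((j:ℝ) + 1))
      ≤ (1 / Real.sqrt ((j:ℝ) + 1)) * (2 * ((j:ℝ) + 1) * Real.sqrt ((j:ℝ) + 1)) :=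
        mul_le_mul_of_nonneg_right h1 (by positivity)
    _ = 1 * (2 * (j:ℝ) + 2) := by field_simp

lemma aOne_sub_le (a b : ℕ) (hab : a ≤ b) (D : ℝ)
    (hD : ∀ i, a ≤ i → i < b → aOne i - aOne (i + 1) ≤ D) :
    aOne a - aOne b ≤ ((b - a : ℕ) : ℝ) * D := by
  induction b, hab using Nat.le_induction with
  | base => simp
  | succ b hab ih =>
    have h1 : aOne a - aOne b ≤ ((b - a : ℕ) : ℝ) * D :=
      ih fun i hi hib => hD i hi (by omega)
    have h2 : aOne b - aOne (b + 1) ≤ D := hD b hab (by omega)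
    have e : ((b + 1 - a : ℕ) : ℝ) = ((b - a : ℕ) : ℝ) + 1 := by
      have h3 : b + 1 - a = (b - a) + 1 := by omega
      rw [h3]; push_cast; ring
    rw [e]
    linarith

lemma sqrt_four : Real.sqrt 4 = 2 := by
  rw [show (4:ℝ) = 2 ^ 2 by norm_num, Real.sqrt_sq (by norm_num : (0:ℝ) ≤ 2)]

lemma aOne_diff (n k : ℕ) (hk : 2 * k ≤ n) (hn : 2 ≤ n) :
    aOne (n - k) - aOne n ≤ 2 * k / ((n:ℝ) * Real.sqrt n) := by
  have hk' : k ≤ n := by omega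
  have hnpos : (0:ℝ) < n := by positivity
  have hsn : 0 < Real.sqrt (n:ℝ) := Real.sqrt_pos.2 hnpos
  have key : aOne (n - k) - aOne n ≤ ((n - (n - k) : ℕ) : ℝ) * (2 / ((n:ℝ) * Real.sqrt n)) := by
    apply aOne_sub_le (n - k) n (by omega)
    intro i hi hib
    refine le_trans (aOne_step_le i) ?_
    have hsi : 0 < Real.sqrt ((i:ℝ) + 1) := Real.sqrt_pos.2 (by positivity)
    rw [div_le_div_iff₀ (by positivity) (by positivity)]
    have hni : (n:ℝ) ≤ 2 * ((i:ℝ) + 1) := by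
      have : n ≤ 2 * (i + 1) := by omega
      exact_mod_cast this
    have hsq : Real.sqrt (n:ℝ) ≤ 2 * Real.sqrt ((i:ℝ) + 1) := by
      have h4 : (n:ℝ) ≤ 4 * ((i:ℝ) + 1) := by linarith
      calc Real.sqrt (n:ℝ) ≤ Real.sqrt (4 * ((i:ℝ) + 1)) := Real.sqrt_le_sqrt h4
        _ = 2 * Real.sqrt ((i:ℝ) + 1) := by
            rw [Real.sqrt_mul (by norm_num : (0:ℝ) ≤ 4), sqrt_four]
    calc 1 * ((n:ℝ) * Real.sqrt n) = (n:ℝ) * Real.sqrt n := by ring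
      _ ≤ (2 * ((i:ℝ) + 1)) * (2 * Real.sqrt ((i:ℝ) + 1)) :=
          mul_le_mul hni hsq hsn.le (by positivity)
      _ = 2 * (2 * ((i:ℝ) + 1) * Real.sqrt ((i:ℝ) + 1)) := by ring
  have e : ((n - (n - k) : ℕ) : ℝ) = (k : ℝ) := by
    have : n - (n - k) = k := by omega
    rw [this]
  rw [e] at key
  calc aOne (n - k) - aOne n ≤ (k : ℝ) * (2 / ((n:ℝ) * Real.sqrt n)) := key
    _ = 2 * k / ((n:ℝ) * Real.sqrt n) := by ring

lemma sum_aOne_le (N : ℕ) : ∑ j ∈ Finset.range N, aOne j ≤ 2 * Real.sqrt N := by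
  calc ∑ j ∈ Finset.range N, aOne j ≤ ∑ j ∈ Finset.range N, 1 / Real.sqrt (j + 1) :=
        Finset.sum_le_sum fun j _ => aOne_le j
    _ ≤ 2 * Real.sqrt N := sum_one_div_sqrt N






lemma core (r : ℕ) (p : ℝ) (hp : 3/2 ≤ p) (hp2 : p ≤ 2) (M : ℝ) (hM : 0 ≤ M) (h : ℕ → ℝ)
    (h1b : |h 1| ≤ M)
    (hh : ∀ j : ℕ, 2 ≤ j → |h j| ≤ M * (Real.log j) ^ r / (j:ℝ) ^ p)
    (hsum : HasSum h 0) (n : ℕ) (hn : 2 ≤ n) :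
    |∑ k ∈ Finset.range (n + 1), h k * aOne (n - k)|
      ≤ 2 * M / ((n:ℝ) * Real.sqrt n)
        + ∑ k ∈ Finset.Ico 2 (n / 2 + 1),
            (M * (Real.log n) ^ r / (k:ℝ) ^ p) * (2 * k / ((n:ℝ) * Real.sqrt n))
        + 3 * M * (Real.log n) ^ r * Real.sqrt n * ((n:ℝ) / 2) ^ (-p)
        + Ctail r p * M * (Real.log n) ^ r * (n:ℝ) ^ (1 - p) / Real.sqrt n := by
  have hnpos : (0:ℝ) < n := by positivity
  have hsn : (0:ℝ) < Real.sqrt n := Real.sqrt_pos.2 hnpos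
  have hL : 0 ≤ Real.log n := Real.log_nonneg (by exact_mod_cast (by omega : 1 ≤ n))
  have hn2R : (2:ℝ) ≤ n := by exact_mod_cast hn
  -- decomposition
  have hdecomp : ∑ k ∈ Finset.range (n + 1), h k * aOne (n - k)
      = ∑ k ∈ Finset.range (n + 1), h k * (aOne (n - k) - aOne n)
        + (∑ k ∈ Finset.range (n + 1), h k) * aOne n := by
    rw [Finset.sum_mul, ← Finset.sum_add_distrib]
    exact Finset.sum_congr rfl fun k _ => by ring
  -- the diff-sum, with absolute values
  have habs : |∑ k ∈ Finset.range (n + 1), h k * (aOne (n - k) - aOne n)|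
      ≤ ∑ k ∈ Finset.range (n + 1), |h k| * (aOne (n - k) - aOne n) := by
    refine le_trans (Finset.abs_sum_le_sum_abs _ _) (Finset.sum_le_sum fun k hk => ?_)
    rw [abs_mul]
    have hkn : n - k ≤ n := by omega
    have : 0 ≤ aOne (n - k) - aOne n := sub_nonneg.2 (aOne_mono hkn)
    rw [abs_of_nonneg this]
  -- tail via HasSum
  have hshift : HasSum (fun k => h (k + (n + 1))) (0 - ∑ i ∈ Finset.range (n + 1), h i) :=
    (hasSum_nat_add_iff' (n + 1)).2 hsum
  have htsum : ∑' k : ℕ, h (k + (n + 1)) = - ∑ i ∈ Finset.range (n + 1), h i := by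
    rw [hshift.tsum_eq]; ring
  have htail : |∑ i ∈ Finset.range (n + 1), h i|
      ≤ Ctail r p * M * (Real.log n) ^ r * (n:ℝ) ^ (1 - p) := by
    have := tail_bound r p hp M hM h hh hsum.summable n hn
    rw [htsum, abs_neg] at this
    exact this
  -- split the diff-sum ranges
  have hsplit1 : ∑ k ∈ Finset.range (n + 1), |h k| * (aOne (n - k) - aOne n)
      = (|h 0| * (aOne (n - 0) - aOne n) + |h 1| * (aOne (n - 1) - aOne n))
        + ∑ k ∈ Finset.Ico 2 (n + 1), |h k| * (aOne (n - k) - aOne n) := by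
    rw [← Finset.sum_range_add_sum_Ico _ (by omega : 2 ≤ n + 1)]
    congr 1
    rw [Finset.sum_range_succ, Finset.sum_range_one]
  have hsplit2 : ∑ k ∈ Finset.Ico 2 (n + 1), |h k| * (aOne (n - k) - aOne n)
      = ∑ k ∈ Finset.Ico 2 (n / 2 + 1), |h k| * (aOne (n - k) - aOne n)
        + ∑ k ∈ Finset.Ico (n / 2 + 1) (n + 1), |h k| * (aOne (n - k) - aOne n) := by
    rw [Finset.sum_Ico_consecutive _ (by omega : 2 ≤ n / 2 + 1) (by omega : n / 2 + 1 ≤ n + 1)]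
  -- piece 0
  have hp0 : |h 0| * (aOne (n - 0) - aOne n) = 0 := by
    simp
  -- piece 1
  have hp1 : |h 1| * (aOne (n - 1) - aOne n) ≤ 2 * M / ((n:ℝ) * Real.sqrt n) := by
    have hd := aOne_diff n 1 (by omega) hn
    have hnn : 0 ≤ aOne (n - 1) - aOne n := sub_nonneg.2 (aOne_mono (by omega))
    calc |h 1| * (aOne (n - 1) - aOne n) ≤ M * (2 * 1 / ((n:ℝ) * Real.sqrt n)) := by
          apply mul_le_mul h1b ?_ hnn hM
          simpa using hd
      _ = 2 * M / ((n:ℝ) * Real.sqrt n) := by ring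
  -- piece 2 (middle range)
  have hp2' : ∑ k ∈ Finset.Ico 2 (n / 2 + 1), |h k| * (aOne (n - k) - aOne n)
      ≤ ∑ k ∈ Finset.Ico 2 (n / 2 + 1),
          (M * (Real.log n) ^ r / (k:ℝ) ^ p) * (2 * k / ((n:ℝ) * Real.sqrt n)) := by
    apply Finset.sum_le_sum
    intro k hk
    simp only [Finset.mem_Ico] at hk
    obtain ⟨hk2, hkle⟩ := hk
    have hkn : 2 * k ≤ n := by omega
    have hkpos : (0:ℝ) < k := by positivity
    have hkp : (0:ℝ) < (k:ℝ) ^ p := Real.rpow_pos_of_pos hkpos p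
    have hlogk : (Real.log k) ^ r ≤ (Real.log n) ^ r := by
      apply pow_le_pow_left₀ (Real.log_nonneg (by exact_mod_cast (by omega : 1 ≤ k)))
      exact Real.log_le_log hkpos (by exact_mod_cast (by omega : k ≤ n))
    have hhk : |h k| ≤ M * (Real.log n) ^ r / (k:ℝ) ^ p := by
      refine le_trans (hh k hk2) ?_
      gcongr
    have hd := aOne_diff n k hkn hn
    have hnn : 0 ≤ aOne (n - k) - aOne n := sub_nonneg.2 (aOne_mono (by omega))
    exact mul_le_mul hhk hd hnn (by positivity)
  -- piece 3 (upper range)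
  have hp3 : ∑ k ∈ Finset.Ico (n / 2 + 1) (n + 1), |h k| * (aOne (n - k) - aOne n)
      ≤ 3 * M * (Real.log n) ^ r * Real.sqrt n * ((n:ℝ) / 2) ^ (-p) := by
    have hn2pos : (0:ℝ) < (n:ℝ) / 2 := by positivity
    have hterm : ∀ k ∈ Finset.Ico (n / 2 + 1) (n + 1),
        |h k| * (aOne (n - k) - aOne n) ≤ M * (Real.log n) ^ r * ((n:ℝ)/2) ^ (-p) * aOne (n - k) := by
      intro k hk
      simp only [Finset.mem_Ico] at hk
      obtain ⟨hklo, hkhi⟩ := hk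
      have hk2 : 2 ≤ k := by omega
      have hkpos : (0:ℝ) < k := by positivity
      have hlogk : (Real.log k) ^ r ≤ (Real.log n) ^ r := by
        apply pow_le_pow_left₀ (Real.log_nonneg (by exact_mod_cast (by omega : 1 ≤ k)))
        exact Real.log_le_log hkpos (by exact_mod_cast (by omega : k ≤ n))
      have hklow : (n:ℝ)/2 ≤ (k:ℝ) := by
        have : n ≤ 2 * k := by omega
        have : (n:ℝ) ≤ 2 * k := by exact_mod_cast this
        linarith
      have hkp : ((n:ℝ)/2) ^ p ≤ (k:ℝ) ^ p :=
        Real.rpow_le_rpow hn2pos.le hklow (by linarith)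
      have hinv : ((k:ℝ) ^ p)⁻¹ ≤ (((n:ℝ)/2) ^ p)⁻¹ := by
        apply inv_anti₀ (Real.rpow_pos_of_pos hn2pos p) hkp
      have hhk : |h k| ≤ M * (Real.log n) ^ r * ((n:ℝ)/2) ^ (-p) := by
        refine le_trans (hh k hk2) ?_
        rw [div_eq_mul_inv, Real.rpow_neg hn2pos.le]
        apply mul_le_mul ?_ hinv (by positivity) (by positivity)
        exact mul_le_mul_of_nonneg_left hlogk hM
      have hdiff : aOne (n - k) - aOne n ≤ aOne (n - k) := by
        have := aOne_pos n; linarith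
      have hnn : 0 ≤ aOne (n - k) - aOne n := sub_nonneg.2 (aOne_mono (by omega))
      exact mul_le_mul hhk hdiff hnn (by positivity)
    calc ∑ k ∈ Finset.Ico (n / 2 + 1) (n + 1), |h k| * (aOne (n - k) - aOne n)
        ≤ ∑ k ∈ Finset.Ico (n / 2 + 1) (n + 1),
            M * (Real.log n) ^ r * ((n:ℝ)/2) ^ (-p) * aOne (n - k) := Finset.sum_le_sum hterm
      _ = M * (Real.log n) ^ r * ((n:ℝ)/2) ^ (-p) * ∑ k ∈ Finset.Ico (n / 2 + 1) (n + 1), aOne (n - k) := by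
          rw [Finset.mul_sum]
      _ ≤ M * (Real.log n) ^ r * ((n:ℝ)/2) ^ (-p) * (3 * Real.sqrt n) := by
          apply mul_le_mul_of_nonneg_left ?_ (by positivity)
          calc ∑ k ∈ Finset.Ico (n / 2 + 1) (n + 1), aOne (n - k)
              ≤ ∑ k ∈ Finset.range (n + 1), aOne (n - k) := by
                apply Finset.sum_le_sum_of_subset_of_nonneg
                · intro k hk
                  simp only [Finset.mem_Ico] at hk
                  simp only [Finset.mem_range]
                  omega
                · intro k _ _
                  exact (aOne_pos _).le
            _ = ∑ j ∈ Finset.range (n + 1), aOne j := by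
                rw [← Finset.sum_range_reflect]
                exact Finset.sum_congr rfl fun j hj => by
                  simp only [Finset.mem_range] at hj
                  congr 1
                  omega
            _ ≤ 2 * Real.sqrt ((n:ℝ) + 1) := by
                have := sum_aOne_le (n + 1)
                push_cast at this
                exact this
            _ ≤ 3 * Real.sqrt n := by
                have h1 : Real.sqrt ((n:ℝ) + 1) ≤ Real.sqrt (9/4 * n) :=
                  Real.sqrt_le_sqrt (by linarith)
                have h2 : Real.sqrt (9/4 * (n:ℝ)) = 3/2 * Real.sqrt n := by
                  rw [Real.sqrt_mul (by norm_num : (0:ℝ) ≤ 9/4),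
                    show Real.sqrt (9/4) = 3/2 from by
                      rw [show (9/4:ℝ) = (3/2) ^ 2 by norm_num, Real.sqrt_sq (by norm_num : (0:ℝ) ≤ 3/2)]]
                linarith
      _ = 3 * M * (Real.log n) ^ r * Real.sqrt n * ((n:ℝ) / 2) ^ (-p) := by ring
  -- piece 4 (tail)
  have hp4 : |(∑ k ∈ Finset.range (n + 1), h k) * aOne n|
      ≤ Ctail r p * M * (Real.log n) ^ r * (n:ℝ) ^ (1 - p) / Real.sqrt n := by
    rw [abs_mul, abs_of_nonneg (aOne_pos n).le]
    have ha : aOne n ≤ 1 / Real.sqrt n := by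
      refine le_trans (aOne_le n) ?_
      apply div_le_div_of_nonneg_left (by norm_num) hsn
      exact Real.sqrt_le_sqrt (by linarith)
    have h0le : 0 ≤ Ctail r p * M * (Real.log n) ^ r * (n:ℝ) ^ (1 - p) :=
      le_trans (abs_nonneg _) htail
    calc |∑ k ∈ Finset.range (n + 1), h k| * aOne n
        ≤ (Ctail r p * M * (Real.log n) ^ r * (n:ℝ) ^ (1 - p)) * (1 / Real.sqrt n) :=
          mul_le_mul htail ha (aOne_pos n).le h0le
      _ = Ctail r p * M * (Real.log n) ^ r * (n:ℝ) ^ (1 - p) / Real.sqrt n := by ring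
  -- assemble
  calc |∑ k ∈ Finset.range (n + 1), h k * aOne (n - k)|
      ≤ |∑ k ∈ Finset.range (n + 1), h k * (aOne (n - k) - aOne n)|
        + |(∑ k ∈ Finset.range (n + 1), h k) * aOne n| := by
        rw [hdecomp]; exact abs_add_le _ _
    _ ≤ ∑ k ∈ Finset.range (n + 1), |h k| * (aOne (n - k) - aOne n)
        + |(∑ k ∈ Finset.range (n + 1), h k) * aOne n| := by linarith [habs]
    _ ≤ _ := by
        rw [hsplit1, hsplit2, hp0]
        have := hp1
        have := hp2'
        have := hp3
        have := hp4
        linarith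






lemma rpow_three_halves (x : ℝ) (hx : 0 < x) : x ^ ((3:ℝ)/2) = x * Real.sqrt x := by
  rw [show (3:ℝ)/2 = 1 + 1/2 by norm_num, Real.rpow_add hx, Real.rpow_one, ← Real.sqrt_eq_rpow]

lemma sqrt_ge_one (n : ℕ) (hn : 2 ≤ n) : 1 ≤ Real.sqrt n := by
  rw [show (1:ℝ) = Real.sqrt 1 by simp]
  exact Real.sqrt_le_sqrt (by exact_mod_cast (by omega : 1 ≤ n))

lemma sum_inv_sqrt_Ico (n : ℕ) (hn : 2 ≤ n) :
    ∑ k ∈ Finset.Ico 2 (n / 2 + 1), 1 / Real.sqrt k ≤ 2 * Real.sqrt n := by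
  calc ∑ k ∈ Finset.Ico 2 (n / 2 + 1), 1 / Real.sqrt k
      ≤ ∑ k ∈ Finset.Ico 1 (n / 2 + 1), 1 / Real.sqrt k := by
        apply Finset.sum_le_sum_of_subset_of_nonneg (Finset.Ico_subset_Ico (by omega) le_rfl)
        intro k _ _
        positivity
    _ = ∑ j ∈ Finset.range (n / 2), 1 / Real.sqrt ((1 + j : ℕ)) := by
        rw [Finset.sum_Ico_eq_sum_range, show n / 2 + 1 - 1 = n / 2 from by omega]
    _ = ∑ j ∈ Finset.range (n / 2), 1 / Real.sqrt ((j:ℝ) + 1) := by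
        refine Finset.sum_congr rfl fun j _ => ?_
        congr 1
        push_cast
        ring
    _ ≤ 2 * Real.sqrt ((n / 2 : ℕ)) := sum_one_div_sqrt (n / 2)
    _ ≤ 2 * Real.sqrt n := by
        have : ((n / 2 : ℕ) : ℝ) ≤ (n : ℝ) := by exact_mod_cast (by omega : n / 2 ≤ n)
        have := Real.sqrt_le_sqrt this
        linarith

lemma case0 (r : ℕ) :
    ∃ C : ℝ, ∀ (M : ℝ) (h : ℕ → ℝ),
      |h 0| ≤ M → |h 1| ≤ M →
      (∀ n : ℕ, 2 ≤ n → |h n| ≤ M * (Real.log n) ^ r / (n : ℝ) ^ ((((0:ℕ) : ℝ) + 3) / 2)) →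
      HasSum h 0 →
      ∀ n : ℕ, 2 ≤ n →
        |∑ k ∈ Finset.range (n + 1), h k * aOne (n - k)|
          ≤ C * M * (Real.log n) ^ (r + 0 % 2) / (n : ℝ) ^ ((((0:ℕ) : ℝ) + 2) / 2) := by
  refine ⟨2 / (Real.log 2) ^ r + 4 + 9 + Ctail r (3/2), ?_⟩
  intro M h h0 h1 hh hsum n hn
  have hM : 0 ≤ M := le_trans (abs_nonneg _) h0
  have e3 : ((((0:ℕ) : ℝ) + 3) / 2) = (3:ℝ)/2 := by norm_num
  have e2 : ((((0:ℕ) : ℝ) + 2) / 2) = (1:ℝ) := by norm_num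
  simp only [e3] at hh
  rw [e2, Real.rpow_one]
  simp only [Nat.zero_mod, Nat.add_zero]
  have hnpos : (0:ℝ) < n := by positivity
  have hn2R : (2:ℝ) ≤ n := by exact_mod_cast hn
  have hsn : 0 < Real.sqrt (n:ℝ) := Real.sqrt_pos.2 hnpos
  have hsn1 : 1 ≤ Real.sqrt (n:ℝ) := sqrt_ge_one n hn
  have hss : Real.sqrt (n:ℝ) * Real.sqrt (n:ℝ) = n := Real.mul_self_sqrt hnpos.le
  have hL : 0 ≤ Real.log n := Real.log_nonneg (by linarith)
  have hlog2 : 0 < Real.log 2 := Real.log_pos (by norm_num)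
  have hL2 : Real.log 2 ≤ Real.log n := Real.log_le_log (by norm_num) (by linarith)
  have hLr : (Real.log 2) ^ r ≤ (Real.log n) ^ r := pow_le_pow_left₀ hlog2.le hL2 r
  have hcore := core r (3/2) (by norm_num) (by norm_num) M hM h h1 hh hsum n hn
  set L := Real.log n with hLdef
  -- piece bounds
  have hP1 : 2 * M / ((n:ℝ) * Real.sqrt n) ≤ 2 / (Real.log 2) ^ r * (M * L ^ r / n) := by
    have s1 : 2 * M / ((n:ℝ) * Real.sqrt n) ≤ 2 * M / n := by
      apply div_le_div_of_nonneg_left (by linarith) hnpos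
      nlinarith
    have hone : (1:ℝ) ≤ L ^ r / (Real.log 2) ^ r := (one_le_div (by positivity)).2 hLr
    have s2 : 2 * M / n ≤ 2 / (Real.log 2) ^ r * (M * L ^ r / n) := by
      calc 2 * M / (n:ℝ) ≤ 2 * M / n * (L ^ r / (Real.log 2) ^ r) :=
            le_mul_of_one_le_right (by positivity) hone
        _ = 2 / (Real.log 2) ^ r * (M * L ^ r / n) := by
            field_simp
    linarith
  have hP2 : ∑ k ∈ Finset.Ico 2 (n / 2 + 1),
      (M * L ^ r / (k:ℝ) ^ ((3:ℝ)/2)) * (2 * k / ((n:ℝ) * Real.sqrt n))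
      ≤ 4 * (M * L ^ r / n) := by
    have hterm : ∀ k ∈ Finset.Ico 2 (n / 2 + 1),
        (M * L ^ r / (k:ℝ) ^ ((3:ℝ)/2)) * (2 * k / ((n:ℝ) * Real.sqrt n))
          = (2 * M * L ^ r / ((n:ℝ) * Real.sqrt n)) * (1 / Real.sqrt k) := by
      intro k hk
      simp only [Finset.mem_Ico] at hk
      have hkpos : (0:ℝ) < k := by
        have : 2 ≤ k := hk.1
        positivity
      have hsk : 0 < Real.sqrt (k:ℝ) := Real.sqrt_pos.2 hkpos
      rw [rpow_three_halves _ hkpos]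
      have hkk : Real.sqrt (k:ℝ) * Real.sqrt (k:ℝ) = k := Real.mul_self_sqrt hkpos.le
      field_simp
    rw [Finset.sum_congr rfl hterm, ← Finset.mul_sum]
    calc (2 * M * L ^ r / ((n:ℝ) * Real.sqrt n)) * ∑ k ∈ Finset.Ico 2 (n / 2 + 1), 1 / Real.sqrt (k:ℝ)
        ≤ (2 * M * L ^ r / ((n:ℝ) * Real.sqrt n)) * (2 * Real.sqrt n) := by
          apply mul_le_mul_of_nonneg_left (sum_inv_sqrt_Ico n hn) (by positivity)
      _ = 4 * (M * L ^ r) * (Real.sqrt n / (n * Real.sqrt n)) := by ring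
      _ = 4 * (M * L ^ r / n) := by
          rw [show Real.sqrt (n:ℝ) / ((n:ℝ) * Real.sqrt n) = 1 / n from by
            field_simp]
          ring
  have hP3 : 3 * M * L ^ r * Real.sqrt n * ((n:ℝ) / 2) ^ (-(3:ℝ)/2)
      ≤ 9 * (M * L ^ r / n) := by
    have hn2pos : (0:ℝ) < (n:ℝ)/2 := by positivity
    have hrw : ((n:ℝ) / 2) ^ (-(3:ℝ)/2) = 1 / (((n:ℝ)/2) * Real.sqrt ((n:ℝ)/2)) := by
      rw [show (-(3:ℝ)/2) = -((3:ℝ)/2) by norm_num, Real.rpow_neg hn2pos.le,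
        rpow_three_halves _ hn2pos]
      field_simp
    have hsqhalf : Real.sqrt ((n:ℝ)/2) ≥ Real.sqrt n / (3/2) := by
      rw [ge_iff_le, div_le_iff₀ (by norm_num : (0:ℝ) < 3/2)]
      have h1 : Real.sqrt (n:ℝ) ≤ Real.sqrt (9/4 * ((n:ℝ)/2)) := by
        apply Real.sqrt_le_sqrt
        linarith
      have h2 : Real.sqrt (9/4 * ((n:ℝ)/2)) = 3/2 * Real.sqrt ((n:ℝ)/2) := by
        rw [Real.sqrt_mul (by norm_num : (0:ℝ) ≤ 9/4),
          show Real.sqrt (9/4) = 3/2 from by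
            rw [show (9/4:ℝ) = (3/2)^2 by norm_num, Real.sqrt_sq (by norm_num : (0:ℝ) ≤ 3/2)]]
      rw [h2] at h1
      linarith
    have hbig : ((n:ℝ)/2) * Real.sqrt ((n:ℝ)/2) ≥ ((n:ℝ) * Real.sqrt n) / 3 := by
      have hs2 : 0 ≤ Real.sqrt ((n:ℝ)/2) := Real.sqrt_nonneg _
      calc ((n:ℝ)/2) * Real.sqrt ((n:ℝ)/2) ≥ ((n:ℝ)/2) * (Real.sqrt n / (3/2)) := by
            apply mul_le_mul_of_nonneg_left hsqhalf (by positivity)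
        _ = ((n:ℝ) * Real.sqrt n) / 3 := by ring
    have hx : ((n:ℝ) / 2) ^ (-(3:ℝ)/2) ≤ 3 / ((n:ℝ) * Real.sqrt n) := by
      rw [hrw, div_le_div_iff₀ (by positivity) (by positivity)]
      nlinarith [hbig, hsn, hnpos]
    calc 3 * M * L ^ r * Real.sqrt n * ((n:ℝ) / 2) ^ (-(3:ℝ)/2)
        ≤ 3 * M * L ^ r * Real.sqrt n * (3 / ((n:ℝ) * Real.sqrt n)) := by
          apply mul_le_mul_of_nonneg_left hx (by positivity)
      _ = 9 * (M * L ^ r) * (Real.sqrt n / (n * Real.sqrt n)) := by ring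
      _ = 9 * (M * L ^ r / n) := by
          rw [show Real.sqrt (n:ℝ) / ((n:ℝ) * Real.sqrt n) = 1 / n from by field_simp]
          ring
  have hP4 : Ctail r (3/2) * M * L ^ r * (n:ℝ) ^ (1 - (3:ℝ)/2) / Real.sqrt n
      = Ctail r (3/2) * (M * L ^ r / n) := by
    rw [show (1 - (3:ℝ)/2) = -(1/2) by norm_num, Real.rpow_neg hnpos.le,
      ← Real.sqrt_eq_rpow]
    field_simp
    rw [Real.sq_sqrt hnpos.le]
  -- combine
  have hfinal := hcore
  rw [show (-(3/2 : ℝ)) = (-(3:ℝ)/2) from by norm_num] at hfinal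
  calc |∑ k ∈ Finset.range (n + 1), h k * aOne (n - k)|
      ≤ 2 * M / ((n:ℝ) * Real.sqrt n)
        + ∑ k ∈ Finset.Ico 2 (n / 2 + 1),
            (M * L ^ r / (k:ℝ) ^ ((3:ℝ)/2)) * (2 * k / ((n:ℝ) * Real.sqrt n))
        + 3 * M * L ^ r * Real.sqrt n * ((n:ℝ) / 2) ^ (-(3:ℝ)/2)
        + Ctail r (3/2) * M * L ^ r * (n:ℝ) ^ (1 - (3:ℝ)/2) / Real.sqrt n := hfinal
    _ ≤ 2 / (Real.log 2) ^ r * (M * L ^ r / n) + 4 * (M * L ^ r / n) + 9 * (M * L ^ r / n)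
        + Ctail r (3/2) * (M * L ^ r / n) := by
        rw [hP4] at *
        linarith [hP1, hP2, hP3]
    _ = (2 / (Real.log 2) ^ r + 4 + 9 + Ctail r (3/2)) * M * L ^ r / n := by ring

lemma case1 (r : ℕ) :
    ∃ C : ℝ, ∀ (M : ℝ) (h : ℕ → ℝ),
      |h 0| ≤ M → |h 1| ≤ M →
      (∀ n : ℕ, 2 ≤ n → |h n| ≤ M * (Real.log n) ^ r / (n : ℝ) ^ ((((1:ℕ) : ℝ) + 3) / 2)) →
      HasSum h 0 →
      ∀ n : ℕ, 2 ≤ n →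
        |∑ k ∈ Finset.range (n + 1), h k * aOne (n - k)|
          ≤ C * M * (Real.log n) ^ (r + 1 % 2) / (n : ℝ) ^ ((((1:ℕ) : ℝ) + 2) / 2) := by
  refine ⟨2 / (Real.log 2) ^ (r + 1) + 2 + 12 / Real.log 2 + Ctail r 2 / Real.log 2, ?_⟩
  intro M h h0 h1 hh hsum n hn
  have hM : 0 ≤ M := le_trans (abs_nonneg _) h0
  have e3 : ((((1:ℕ) : ℝ) + 3) / 2) = (2:ℝ) := by norm_num
  have e2 : ((((1:ℕ) : ℝ) + 2) / 2) = (3:ℝ)/2 := by norm_num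
  simp only [e3] at hh
  rw [e2]
  have hnpos : (0:ℝ) < n := by positivity
  have hn2R : (2:ℝ) ≤ n := by exact_mod_cast hn
  have hsn : 0 < Real.sqrt (n:ℝ) := Real.sqrt_pos.2 hnpos
  have hsn1 : 1 ≤ Real.sqrt (n:ℝ) := sqrt_ge_one n hn
  have hss : Real.sqrt (n:ℝ) * Real.sqrt (n:ℝ) = n := Real.mul_self_sqrt hnpos.le
  have hL : 0 ≤ Real.log n := Real.log_nonneg (by linarith)
  have hlog2 : 0 < Real.log 2 := Real.log_pos (by norm_num)
  have hL2 : Real.log 2 ≤ Real.log n := Real.log_le_log (by norm_num) (by linarith)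
  have hLr : (Real.log 2) ^ (r+1) ≤ (Real.log n) ^ (r+1) := pow_le_pow_left₀ hlog2.le hL2 _
  have hcore := core r 2 (by norm_num) (by norm_num) M hM h h1 hh hsum n hn
  set L := Real.log n with hLdef
  rw [show (1:ℕ) % 2 = 1 from rfl]
  rw [rpow_three_halves _ hnpos]
  set E := M * L ^ (r+1) / ((n:ℝ) * Real.sqrt n) with hEdef
  have hEnn : 0 ≤ E := by positivity
  have hLsucc : L ^ (r + 1) = L ^ r * L := pow_succ L r
  have hLrL : L ^ r * Real.log 2 ≤ L ^ (r+1) := by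
    rw [hLsucc]
    exact mul_le_mul_of_nonneg_left hL2 (by positivity)
  -- P1
  have hP1 : 2 * M / ((n:ℝ) * Real.sqrt n) ≤ 2 / (Real.log 2) ^ (r+1) * E := by
    have hone : (1:ℝ) ≤ L ^ (r+1) / (Real.log 2) ^ (r+1) := (one_le_div (by positivity)).2 hLr
    calc 2 * M / ((n:ℝ) * Real.sqrt n)
        ≤ 2 * M / ((n:ℝ) * Real.sqrt n) * (L ^ (r+1) / (Real.log 2) ^ (r+1)) :=
          le_mul_of_one_le_right (by positivity) hone
      _ = 2 / (Real.log 2) ^ (r+1) * E := by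
          rw [hEdef]
          field_simp
  -- P2
  have hP2 : ∑ k ∈ Finset.Ico 2 (n / 2 + 1),
      (M * L ^ r / (k:ℝ) ^ (2:ℝ)) * (2 * k / ((n:ℝ) * Real.sqrt n))
      ≤ 2 * E := by
    have hterm : ∀ k ∈ Finset.Ico 2 (n / 2 + 1),
        (M * L ^ r / (k:ℝ) ^ (2:ℝ)) * (2 * k / ((n:ℝ) * Real.sqrt n))
          = (2 * M * L ^ r / ((n:ℝ) * Real.sqrt n)) * ((1:ℝ) / k) := by
      intro k hk
      simp only [Finset.mem_Ico] at hk
      have hkpos : (0:ℝ) < k := by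
        have : 2 ≤ k := hk.1
        positivity
      rw [show ((k:ℝ) ^ (2:ℝ)) = (k:ℝ) * k from by
        rw [show (2:ℝ) = ((2:ℕ):ℝ) from by norm_num, Real.rpow_natCast]
        ring]
      field_simp
    rw [Finset.sum_congr rfl hterm, ← Finset.mul_sum]
    have hsum1k : ∑ k ∈ Finset.Ico 2 (n / 2 + 1), (1:ℝ) / k ≤ L := by
      have hh1 := sum_inv_le_log (n / 2) (by omega)
      have hh2 : Real.log ((n/2 : ℕ)) ≤ L := by
        apply Real.log_le_log (by exact_mod_cast (by omega : 1 ≤ n/2))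
        exact_mod_cast (by omega : n / 2 ≤ n)
      linarith
    calc (2 * M * L ^ r / ((n:ℝ) * Real.sqrt n)) * ∑ k ∈ Finset.Ico 2 (n / 2 + 1), (1:ℝ) / k
        ≤ (2 * M * L ^ r / ((n:ℝ) * Real.sqrt n)) * L :=
          mul_le_mul_of_nonneg_left hsum1k (by positivity)
      _ = 2 * E := by
          rw [hEdef, hLsucc]
          ring
  -- P3
  have hP3 : 3 * M * L ^ r * Real.sqrt n * ((n:ℝ) / 2) ^ (-(2:ℝ))
      ≤ 12 / Real.log 2 * E := by
    have hrw : ((n:ℝ) / 2) ^ (-(2:ℝ)) = 4 / ((n:ℝ) * n) := by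
      rw [Real.rpow_neg (by positivity), show ((2:ℝ)) = ((2:ℕ):ℝ) from by norm_num,
        Real.rpow_natCast]
      field_simp
      ring
    have heq : 3 * M * L ^ r * Real.sqrt n * (4 / ((n:ℝ) * n)) = 12 * M * L ^ r / ((n:ℝ) * Real.sqrt n) := by
      rw [show (n:ℝ) * n = ((n:ℝ) * Real.sqrt n) * Real.sqrt n from by rw [mul_assoc, hss]]
      field_simp
      ring
    rw [hrw, heq]
    have hnum : 12 * M * L ^ r ≤ 12 / Real.log 2 * (M * L ^ (r+1)) := by
      rw [div_mul_eq_mul_div, le_div_iff₀ hlog2]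
      calc 12 * M * L ^ r * Real.log 2 = 12 * (M * (L ^ r * Real.log 2)) := by ring
        _ ≤ 12 * (M * L ^ (r+1)) := by
            apply mul_le_mul_of_nonneg_left (mul_le_mul_of_nonneg_left hLrL hM) (by norm_num)
    calc 12 * M * L ^ r / ((n:ℝ) * Real.sqrt n)
        ≤ (12 / Real.log 2 * (M * L ^ (r+1))) / ((n:ℝ) * Real.sqrt n) := by
          apply div_le_div_of_nonneg_right hnum (by positivity)
      _ = 12 / Real.log 2 * E := by rw [hEdef]; ring
  -- P4
  have hCt : 0 ≤ Ctail r 2 := by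
    have h1 : (r:ℝ) * (4 * ((r:ℝ) + 1))⁻¹ ≤ 1/4 := by
      rw [mul_inv_le_iff₀ (by positivity)]
      nlinarith [Nat.cast_nonneg (α := ℝ) r]
    have hd : (0:ℝ) < 2 - (r:ℝ) * (4 * ((r:ℝ) + 1))⁻¹ - 1 := by linarith
    unfold Ctail
    apply add_nonneg
    · apply div_nonneg (by positivity)
      norm_num
    · apply div_nonneg (by positivity)
      positivity
  have hP4 : Ctail r 2 * M * L ^ r * (n:ℝ) ^ (1 - (2:ℝ)) / Real.sqrt n
      ≤ Ctail r 2 / Real.log 2 * E := by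
    have hrw : (n:ℝ) ^ (1 - (2:ℝ)) = 1 / n := by
      rw [show (1 - (2:ℝ)) = -1 by norm_num, Real.rpow_neg_one]
      field_simp
    rw [hrw]
    have heq : Ctail r 2 * M * L ^ r * (1 / (n:ℝ)) / Real.sqrt n
        = Ctail r 2 * M * L ^ r / ((n:ℝ) * Real.sqrt n) := by
      field_simp
    rw [heq]
    have hnum : Ctail r 2 * M * L ^ r ≤ Ctail r 2 / Real.log 2 * (M * L ^ (r+1)) := by
      rw [div_mul_eq_mul_div, le_div_iff₀ hlog2]
      calc Ctail r 2 * M * L ^ r * Real.log 2 = Ctail r 2 * (M * (L ^ r * Real.log 2)) := by ring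
        _ ≤ Ctail r 2 * (M * L ^ (r+1)) := by
            apply mul_le_mul_of_nonneg_left (mul_le_mul_of_nonneg_left hLrL hM) hCt
    calc Ctail r 2 * M * L ^ r / ((n:ℝ) * Real.sqrt n)
        ≤ (Ctail r 2 / Real.log 2 * (M * L ^ (r+1))) / ((n:ℝ) * Real.sqrt n) := by
          apply div_le_div_of_nonneg_right hnum (by positivity)
      _ = Ctail r 2 / Real.log 2 * E := by rw [hEdef]; ring
  -- combine
  calc |∑ k ∈ Finset.range (n + 1), h k * aOne (n - k)|
      ≤ 2 * M / ((n:ℝ) * Real.sqrt n)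
        + ∑ k ∈ Finset.Ico 2 (n / 2 + 1),
            (M * L ^ r / (k:ℝ) ^ (2:ℝ)) * (2 * k / ((n:ℝ) * Real.sqrt n))
        + 3 * M * L ^ r * Real.sqrt n * ((n:ℝ) / 2) ^ (-(2:ℝ))
        + Ctail r 2 * M * L ^ r * (n:ℝ) ^ (1 - (2:ℝ)) / Real.sqrt n := hcore
    _ ≤ 2 / (Real.log 2) ^ (r+1) * E + 2 * E + 12 / Real.log 2 * E + Ctail r 2 / Real.log 2 * E := by
        linarith [hP1, hP2, hP3, hP4]
    _ = (2 / (Real.log 2) ^ (r + 1) + 2 + 12 / Real.log 2 + Ctail r 2 / Real.log 2) * M * L ^ (r + 1) / ((n:ℝ) * Real.sqrt n) := by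
        rw [hEdef]
        ring

/-- Core estimate for division by `√(1-s)`: for `m ∈ {0,1}`, the convolution
of an `H_m^r` sequence with `a^{(1)}` is `O(M (log n)^{r+δ_m} / n^{(m+2)/2})`. -/
theorem stmt_13 (m r : ℕ) (hm : m ≤ 1) :
    ∃ C : ℝ, ∀ (M : ℝ) (h : ℕ → ℝ),
      |h 0| ≤ M → |h 1| ≤ M →
      (∀ n : ℕ, 2 ≤ n → |h n| ≤ M * (Real.log n) ^ r / (n : ℝ) ^ (((m : ℝ) + 3) / 2)) →
      HasSum h 0 →
      ∀ n : ℕ, 2 ≤ n →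
        |∑ k ∈ Finset.range (n + 1), h k * aOne (n - k)|
          ≤ C * M * (Real.log n) ^ (r + m % 2) / (n : ℝ) ^ (((m : ℝ) + 2) / 2) := by
  interval_cases m
  · exact case0 r
  · exact case1 r
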